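/- arXiv:1701.07684 — 2 statements merged into one kernel-verified Lean document; each statement's English description precedes it below -/
import Mathlib

section
/- In a near group G, if x·y ∈ G then (x·y)⁻¹ = y⁻¹·x⁻¹ for all x, y ∈ G. -/
namespace NearStmt

variable {O : Type*}

/-- `up` is an upper approximation operator: every set is contained in its upper approximation. -/
def IsUpper {O : Type*} (up : Set O → Set O) : Prop := ∀ X : Set O, X ⊆ up X

/-- A near group on a nearness approximation space: products of elements of `G` land in the
upper approximation `up G`, associativity holds for elements of `G`, there is a near identity
`e ∈ up G`, and every element of `G` has a near inverse in `G`. -/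
structure IsNearGroup {O : Type*} (op : O → O → O) (up : Set O → Set O) (G : Set O) : Prop where
  closure : ∀ x ∈ G, ∀ y ∈ G, op x y ∈ up G
  assoc : ∀ x ∈ G, ∀ y ∈ G, ∀ z ∈ G, op (op x y) z = op x (op y z)
  ident : ∃ e ∈ up G, (∀ x ∈ G, op x e = x ∧ op e x = x) ∧
    ∀ x ∈ G, ∃ y ∈ G, op x y = e ∧ op y x = e

/-- A nearness ring on a nearness approximation space. -/
structure IsNearRing {O : Type*} (add mul : O → O → O) (up : Set O → Set O) (R : Set O) : Prop where
  add_closure : ∀ x ∈ R, ∀ y ∈ R, add x y ∈ up R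
  add_assoc : ∀ x ∈ R, ∀ y ∈ R, ∀ z ∈ R, add (add x y) z = add x (add y z)
  add_comm : ∀ x ∈ R, ∀ y ∈ R, add x y = add y x
  zero : ∃ z ∈ up R, (∀ x ∈ R, add x z = x ∧ add z x = x) ∧
    ∀ x ∈ R, ∃ y ∈ R, add x y = z ∧ add y x = z
  mul_closure : ∀ x ∈ R, ∀ y ∈ R, mul x y ∈ up R
  mul_assoc : ∀ x ∈ R, ∀ y ∈ R, ∀ z ∈ R, mul (mul x y) z = mul x (mul y z)
  left_distrib : ∀ x ∈ R, ∀ y ∈ R, ∀ z ∈ R, mul x (add y z) = add (mul x y) (mul x z)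
  right_distrib : ∀ x ∈ R, ∀ y ∈ R, ∀ z ∈ R, mul (add x y) z = add (mul x z) (mul y z)

/-- A nearness ideal of a nearness ring `R` (with `neg` the additive near inverse map):
a nonempty subset `I ⊆ R` with `x - y ∈ up I`, `r·x ∈ up I` and `x·r ∈ up I`
for all `x, y ∈ I`, `r ∈ R`. -/
def IsNearIdeal {O : Type*} (add mul : O → O → O) (neg : O → O) (up : Set O → Set O)
    (R I : Set O) : Prop :=
  I.Nonempty ∧ I ⊆ R ∧
  (∀ x ∈ I, ∀ y ∈ I, add x (neg y) ∈ up I) ∧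
  (∀ x ∈ I, ∀ r ∈ R, mul r x ∈ up I ∧ mul x r ∈ up I)

/-- The weak coset `x + S = {x + s | s ∈ S, x + s ∈ R} ∪ {x}`. -/
def weakCoset {O : Type*} (add : O → O → O) (R S : Set O) (x : O) : Set O :=
  {y | ∃ s ∈ S, y = add x s ∧ y ∈ R} ∪ {x}

/-- The set `R/∼` of all weak cosets of `R` by `S`. -/
def quotSet {O : Type*} (add : O → O → O) (R S : Set O) : Set (Set O) :=
  {A | ∃ x ∈ R, A = weakCoset add R S x}

section Cancel

variable {op : O → O → O} {G : Set O} {e : O}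
  (hassoc : ∀ x ∈ G, ∀ y ∈ G, ∀ z ∈ G, op (op x y) z = op x (op y z))
  (hid : ∀ x ∈ G, op x e = x ∧ op e x = x)
include hassoc hid

theorem op_cancel_left {a' a b : O} (ha' : a' ∈ G) (ha : a ∈ G) (hb : b ∈ G)
    (hinv : op a' a = e) : op a' (op a b) = b := by
  rw [← hassoc a' ha' a ha b hb, hinv, (hid b hb).2]

/-- Since `y·w` need not lie in `G`, associativity is applied to `x'·(x·y)·w` instead. -/
theorem op_eq_left_inv_of_mul_right_inv {x x' y w : O} (hx : x ∈ G) (hx' : x' ∈ G)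
    (hy : y ∈ G) (hw : w ∈ G) (hxy : op x y ∈ G) (hxinv : op x' x = e)
    (hwinv : op (op x y) w = e) : op y w = x' :=
  calc op y w = op (op x' (op x y)) w := by rw [op_cancel_left hassoc hid hx' hx hy hxinv]
    _ = op x' (op (op x y) w) := hassoc x' hx' (op x y) hxy w hw
    _ = x' := by rw [hwinv, (hid x' hx').1]

end Cancel

theorem stmt3_general {O : Type*} (op : O → O → O) (up : Set O → Set O)
    (G : Set O) (hG : IsNearGroup op up G)
    (e : O) (hid : ∀ x ∈ G, op x e = x ∧ op e x = x) :
    ∀ x ∈ G, ∀ y ∈ G, op x y ∈ G →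
      ∀ x' ∈ G, (op x x' = e ∧ op x' x = e) →
      ∀ y' ∈ G, (op y y' = e ∧ op y' y = e) →
      ∀ w ∈ G, (op (op x y) w = e ∧ op w (op x y) = e) →
      w = op y' x' := by
  intro x hx y hy hxy x' hx' hxinv y' hy' hyinv w hw hwinv
  calc w = op y' (op y w) := (op_cancel_left hG.assoc hid hy' hy hw hyinv.2).symm
    _ = op y' x' := by
      rw [op_eq_left_inv_of_mul_right_inv hG.assoc hid hx hx' hy hw hxy hxinv.2 hwinv.1]

/-- In a near group `G`, if `x·y ∈ G` then `(x·y)⁻¹ = y⁻¹·x⁻¹`: given near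
inverses `x'` of `x`, `y'` of `y` and `w` of `x·y`, we have `w = y'·x'`. -/
theorem stmt3 {O : Type*} (op : O → O → O) (up : Set O → Set O) (hup : IsUpper up)
    (G : Set O) (hG : IsNearGroup op up G)
    (e : O) (he : e ∈ up G) (hid : ∀ x ∈ G, op x e = x ∧ op e x = x)
    (hinv : ∀ x ∈ G, ∃ y ∈ G, op x y = e ∧ op y x = e) :
    ∀ x ∈ G, ∀ y ∈ G, op x y ∈ G →
      ∀ x' ∈ G, (op x x' = e ∧ op x' x = e) →
      ∀ y' ∈ G, (op y y' = e ∧ op y' y = e) →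
      ∀ w ∈ G, (op (op x y) w = e ∧ op w (op x y) = e) →
      w = op y' x' :=
  stmt3_general op up G hG e hid

end NearStmt
end

section
/- Let I₁ and I₂ be nearness ideals of a nearness ring R with N_r(B)*I₁ and N_r(B)*I₂ groupoids under + and ·. If (N_r(B)*I₁) ∩ (N_r(B)*I₂) = N_r(B)*(I₁ ∩ I₂), then I₁ ∩ I₂ is a nearness ideal of R. -/
namespace NearStmt

variable {O : Type*}

theorem IsNearIdeal.inter {add mul : O → O → O} {neg : O → O} {up : Set O → Set O}
    {R I₁ I₂ : Set O} (h₁ : IsNearIdeal add mul neg up R I₁) (h₂ : IsNearIdeal add mul neg up R I₂)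
    (hne : (I₁ ∩ I₂).Nonempty) (hcap : up I₁ ∩ up I₂ ⊆ up (I₁ ∩ I₂)) :
    IsNearIdeal add mul neg up R (I₁ ∩ I₂) := by
  obtain ⟨-, hI₁R, hdiff₁, hmul₁⟩ := h₁
  obtain ⟨-, -, hdiff₂, hmul₂⟩ := h₂
  refine ⟨hne, fun x hx => hI₁R hx.1, fun x hx y hy => ?_, fun x hx r hr => ?_⟩
  · exact hcap ⟨hdiff₁ x hx.1 y hy.1, hdiff₂ x hx.2 y hy.2⟩
  · obtain ⟨hrx₁, hxr₁⟩ := hmul₁ x hx.1 r hr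
    obtain ⟨hrx₂, hxr₂⟩ := hmul₂ x hx.2 r hr
    exact ⟨hcap ⟨hrx₁, hrx₂⟩, hcap ⟨hxr₁, hxr₂⟩⟩

theorem stmt10_general {O : Type*} (add mul : O → O → O) (neg : O → O) (up : Set O → Set O)
    (R : Set O)
    (I₁ I₂ : Set O)
    (h₁ : IsNearIdeal add mul neg up R I₁) (h₂ : IsNearIdeal add mul neg up R I₂)
    (hne : (I₁ ∩ I₂).Nonempty)
    (heq : up I₁ ∩ up I₂ = up (I₁ ∩ I₂)) :
    IsNearIdeal add mul neg up R (I₁ ∩ I₂) :=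
  h₁.inter h₂ hne heq.subset

/-- If `I₁, I₂` are nearness ideals of the nearness ring `R` with `up I₁`,
`up I₂` groupoids under `+` and `·`, and `(up I₁) ∩ (up I₂) = up (I₁ ∩ I₂)`, then `I₁ ∩ I₂`
(assumed nonempty) is a nearness ideal of `R`. -/
theorem stmt10 {O : Type*} (add mul : O → O → O) (neg : O → O) (up : Set O → Set O)
    (hup : IsUpper up) (R : Set O) (hR : IsNearRing add mul up R)
    (z : O) (hz : z ∈ up R) (hzid : ∀ x ∈ R, add x z = x ∧ add z x = x)
    (hneg : ∀ x ∈ R, neg x ∈ R ∧ add x (neg x) = z ∧ add (neg x) x = z)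
    (I₁ I₂ : Set O)
    (h₁ : IsNearIdeal add mul neg up R I₁) (h₂ : IsNearIdeal add mul neg up R I₂)
    (hgrp₁ : ∀ x ∈ up I₁, ∀ y ∈ up I₁, add x y ∈ up I₁ ∧ mul x y ∈ up I₁)
    (hgrp₂ : ∀ x ∈ up I₂, ∀ y ∈ up I₂, add x y ∈ up I₂ ∧ mul x y ∈ up I₂)
    (hne : (I₁ ∩ I₂).Nonempty)
    (heq : up I₁ ∩ up I₂ = up (I₁ ∩ I₂)) :
    IsNearIdeal add mul neg up R (I₁ ∩ I₂) :=
  stmt10_general add mul neg up R I₁ I₂ h₁ h₂ hne heq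

end NearStmt
end
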